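/- Let m, n ≥ 1 and let u : Fin m × Fin n → ℝ. Define the discrete forward-difference gradient ∇u = (∂₁u, ∂₂u), where ∂₁u(i,j) = u(i+1,j) − u(i,j) if i < m−1 and 0 if i = m−1, and ∂₂u(i,j) = u(i,j+1) − u(i,j) if j < n−1 and 0 if j = n−1. Then ∑_{i,j}(∂₁u(i,j)² + ∂₂u(i,j)²) + 2∑_{i,j} u(i,j)² ≤ 10 ∑_{i,j} u(i,j)². -/
import Mathlib


open Finset

/-- First component of the discrete forward-difference gradient on an `m × n` grid. -/
def d1 {m n : ℕ} (u : Fin m × Fin n → ℝ) (p : Fin m × Fin n) : ℝ :=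
  if h : (p.1 : ℕ) + 1 < m then u (⟨(p.1 : ℕ) + 1, h⟩, p.2) - u p else 0

/-- Second component of the discrete forward-difference gradient on an `m × n` grid. -/
def d2 {m n : ℕ} (u : Fin m × Fin n → ℝ) (p : Fin m × Fin n) : ℝ :=
  if h : (p.2 : ℕ) + 1 < n then u (p.1, ⟨(p.2 : ℕ) + 1, h⟩) - u p else 0

lemma shift_sum_le {m n : ℕ} (u : Fin m × Fin n → ℝ) (σ : Fin m × Fin n → Fin m × Fin n)
    (c : Fin m × Fin n → Prop) [DecidablePred c]
    (hinj : Set.InjOn σ (Finset.univ.filter c)) :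
    ∑ p ∈ Finset.univ.filter c, (u (σ p)) ^ 2 ≤ ∑ p : Fin m × Fin n, (u p) ^ 2 := by
  rw [← Finset.sum_image (f := fun q => (u q) ^ 2) (g := σ) (fun x hx y hy h => hinj hx hy h)]
  exact Finset.sum_le_sum_of_subset_of_nonneg (Finset.subset_univ _)
    (fun i _ _ => sq_nonneg _)

lemma d1_sum_le {m n : ℕ} (u : Fin m × Fin n → ℝ) :
    ∑ p : Fin m × Fin n, (d1 u p) ^ 2 ≤ 4 * ∑ p : Fin m × Fin n, (u p) ^ 2 := by
  classical
  set σ : Fin m × Fin n → Fin m × Fin n :=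
    fun p => if h : (p.1 : ℕ) + 1 < m then (⟨(p.1 : ℕ) + 1, h⟩, p.2) else p with hσ
  have hpt : ∀ p : Fin m × Fin n,
      (d1 u p) ^ 2 ≤ (if (p.1 : ℕ) + 1 < m then 2 * (u (σ p)) ^ 2 else 0) + 2 * (u p) ^ 2 := by
    intro p
    unfold d1
    split_ifs with h
    · simp only [hσ, h, dif_pos]
      nlinarith [sq_nonneg (u (⟨(p.1 : ℕ) + 1, h⟩, p.2) + u p)]
    · nlinarith [sq_nonneg (u p)]
  calc ∑ p : Fin m × Fin n, (d1 u p) ^ 2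
      ≤ ∑ p : Fin m × Fin n,
          ((if (p.1 : ℕ) + 1 < m then 2 * (u (σ p)) ^ 2 else 0) + 2 * (u p) ^ 2) :=
        Finset.sum_le_sum fun p _ => hpt p
    _ = 2 * (∑ p ∈ Finset.univ.filter (fun p : Fin m × Fin n => (p.1 : ℕ) + 1 < m),
          (u (σ p)) ^ 2) + 2 * ∑ p : Fin m × Fin n, (u p) ^ 2 := by
        rw [Finset.sum_add_distrib, ← Finset.sum_filter, ← Finset.mul_sum, ← Finset.mul_sum]
    _ ≤ 2 * (∑ p : Fin m × Fin n, (u p) ^ 2) + 2 * ∑ p : Fin m × Fin n, (u p) ^ 2 := by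
        have := shift_sum_le u σ (fun p : Fin m × Fin n => (p.1 : ℕ) + 1 < m) ?_
        · linarith
        · intro x hx y hy hxy
          simp only [Finset.coe_filter, Set.mem_setOf_eq, Finset.mem_univ, true_and] at hx hy
          simp only [hσ, dif_pos hx, dif_pos hy, Prod.ext_iff, Fin.ext_iff] at hxy
          exact Prod.ext (Fin.ext (by omega)) (Fin.ext hxy.2)
    _ = 4 * ∑ p : Fin m × Fin n, (u p) ^ 2 := by ring

lemma d2_sum_le {m n : ℕ} (u : Fin m × Fin n → ℝ) :
    ∑ p : Fin m × Fin n, (d2 u p) ^ 2 ≤ 4 * ∑ p : Fin m × Fin n, (u p) ^ 2 := by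
  classical
  set σ : Fin m × Fin n → Fin m × Fin n :=
    fun p => if h : (p.2 : ℕ) + 1 < n then (p.1, ⟨(p.2 : ℕ) + 1, h⟩) else p with hσ
  have hpt : ∀ p : Fin m × Fin n,
      (d2 u p) ^ 2 ≤ (if (p.2 : ℕ) + 1 < n then 2 * (u (σ p)) ^ 2 else 0) + 2 * (u p) ^ 2 := by
    intro p
    unfold d2
    split_ifs with h
    · simp only [hσ, h, dif_pos]
      nlinarith [sq_nonneg (u (p.1, ⟨(p.2 : ℕ) + 1, h⟩) + u p)]
    · nlinarith [sq_nonneg (u p)]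
  calc ∑ p : Fin m × Fin n, (d2 u p) ^ 2
      ≤ ∑ p : Fin m × Fin n,
          ((if (p.2 : ℕ) + 1 < n then 2 * (u (σ p)) ^ 2 else 0) + 2 * (u p) ^ 2) :=
        Finset.sum_le_sum fun p _ => hpt p
    _ = 2 * (∑ p ∈ Finset.univ.filter (fun p : Fin m × Fin n => (p.2 : ℕ) + 1 < n),
          (u (σ p)) ^ 2) + 2 * ∑ p : Fin m × Fin n, (u p) ^ 2 := by
        rw [Finset.sum_add_distrib, ← Finset.sum_filter, ← Finset.mul_sum, ← Finset.mul_sum]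
    _ ≤ 2 * (∑ p : Fin m × Fin n, (u p) ^ 2) + 2 * ∑ p : Fin m × Fin n, (u p) ^ 2 := by
        have := shift_sum_le u σ (fun p : Fin m × Fin n => (p.2 : ℕ) + 1 < n) ?_
        · linarith
        · intro x hx y hy hxy
          simp only [Finset.coe_filter, Set.mem_setOf_eq, Finset.mem_univ, true_and] at hx hy
          simp only [hσ, dif_pos hx, dif_pos hy, Prod.ext_iff, Fin.ext_iff] at hxy
          exact Prod.ext (Fin.ext hxy.1) (Fin.ext (by omega))
    _ = 4 * ∑ p : Fin m × Fin n, (u p) ^ 2 := by ring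

/-- `‖∇u‖² + 2‖u‖² ≤ 10‖u‖²`, i.e. `‖K*K‖ ≤ ‖∇*∇‖ + 2 ≤ 10` for
`K = (-∇; I; -I)` in the two-phase primal-dual formulation. -/
theorem KstarK_two_label_norm_le (m n : ℕ) (hm : 1 ≤ m) (hn : 1 ≤ n)
    (u : Fin m × Fin n → ℝ) :
    (∑ p : Fin m × Fin n, ((d1 u p) ^ 2 + (d2 u p) ^ 2))
        + 2 * ∑ p : Fin m × Fin n, (u p) ^ 2 ≤
      10 * ∑ p : Fin m × Fin n, (u p) ^ 2 := by
  rw [Finset.sum_add_distrib]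
  have h1 := d1_sum_le u
  have h2 := d2_sum_le u
  linarith
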